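/- arXiv:0901.1010 — 5 statements merged into one kernel-verified Lean document; each statement's English description precedes it below -/
import Mathlib

section
/- Fortuin–Kasteleyn representation of the Potts model: Let G be a finite simple graph with vertex set V and edge set E, let q be a positive integer, let R be a commutative ring and let v ∈ R. Then ∑_{σ : V → Fin q} ∏_{e ∈ E} (1 + v·χ(e,σ)) = ∑_{A ⊆ E} (q : R)^{k(A)} · v^{|A|}, where for an edge e = {i,j} one sets χ(e,σ) = 1 if σ(i) = σ(j) and χ(e,σ) = 0 otherwise, and k(A) is the number of connected components of the spanning subgraph of G with vertex set V and edge set A. -/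
/-- **Fortuin–Kasteleyn representation of the Potts model.**
For a finite simple graph `G`, a positive integer `q`, a commutative ring `R`
and `v ∈ R`, the Potts partition function
`∑_{σ : V → Fin q} ∏_{e ∈ E} (1 + v·χ(e,σ))` (where `χ({i,j},σ) = 1` if
`σ i = σ j` and `0` otherwise) equals
`∑_{A ⊆ E} q^{k(A)} v^{|A|}`, where `k(A)` is the number of connected
components of the spanning subgraph `(V, A)`. -/
theorem fortuin_kasteleyn {V : Type*} [Fintype V] [DecidableEq V]
    (G : SimpleGraph V) [DecidableRel G.Adj]
    (q : ℕ) (hq : 0 < q) (R : Type*) [CommRing R] (v : R) :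
    (∑ σ : V → Fin q, ∏ e ∈ G.edgeFinset,
        Sym2.lift ⟨fun i j => 1 + v * (if σ i = σ j then 1 else 0), by
          intro i j
          dsimp only
          by_cases h : σ i = σ j
          · rw [if_pos h, if_pos h.symm]
          · rw [if_neg h, if_neg fun hh => h hh.symm]⟩ e)
      = ∑ A ∈ G.edgeFinset.powerset,
          (q : R) ^ (Nat.card (SimpleGraph.fromEdgeSet (A : Set (Sym2 V))).ConnectedComponent)
            * v ^ A.card := by
  classical
  set P : (V → Fin q) → Sym2 V → Prop :=
    fun σ e => ∀ x ∈ e, ∀ y ∈ e, σ x = σ y with hP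
  have hedge : ∀ (σ : V → Fin q) (e : Sym2 V),
      Sym2.lift ⟨fun i j => 1 + v * (if σ i = σ j then 1 else 0), by
          intro i j
          dsimp only
          by_cases h : σ i = σ j
          · rw [if_pos h, if_pos h.symm]
          · rw [if_neg h, if_neg fun hh => h hh.symm]⟩ e
        = v * (if P σ e then 1 else 0) + 1 := by
    intro σ e
    induction e using Sym2.ind with
    | _ i j =>
      rw [Sym2.lift_mk]
      dsimp only
      rw [add_comm]
      congr 2
      by_cases h : σ i = σ j
      · rw [if_pos h, if_pos ?_]
        intro x hx y hy
        rcases Sym2.mem_iff.mp hx with rfl | rfl <;>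
          rcases Sym2.mem_iff.mp hy with rfl | rfl <;>
          first | rfl | exact h | exact h.symm
      · rw [if_neg h, if_neg ?_]
        intro hall
        exact h (hall i (Sym2.mem_mk_left i j) j (Sym2.mem_mk_right i j))
  have step1 : (∑ σ : V → Fin q, ∏ e ∈ G.edgeFinset,
        Sym2.lift ⟨fun i j => 1 + v * (if σ i = σ j then 1 else 0), by
          intro i j
          dsimp only
          by_cases h : σ i = σ j
          · rw [if_pos h, if_pos h.symm]
          · rw [if_neg h, if_neg fun hh => h hh.symm]⟩ e)
      = ∑ A ∈ G.edgeFinset.powerset, ∑ σ : V → Fin q,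
          v ^ A.card * (if ∀ e ∈ A, P σ e then 1 else 0) := by
    rw [Finset.sum_comm]
    refine Finset.sum_congr rfl fun σ _ => ?_
    rw [Finset.prod_congr rfl fun e _ => hedge σ e, Finset.prod_add]
    refine Finset.sum_congr rfl fun A hA => ?_
    rw [Finset.prod_const_one, mul_one, Finset.prod_mul_distrib,
      Finset.prod_const, Finset.prod_boole]
    by_cases h : ∀ e ∈ A, P σ e
    · simp only [if_pos h]
    · simp only [if_neg h]
  rw [step1]
  refine Finset.sum_congr rfl fun A hA => ?_
  rw [Finset.mem_powerset] at hA
  have hsub : (A : Set (Sym2 V)) ⊆ G.edgeSet := by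
    intro e he
    exact (SimpleGraph.mem_edgeFinset).mp (hA (Finset.mem_coe.mp he))
  -- the key counting equivalence
  have hequiv : {σ : V → Fin q // ∀ e ∈ A, P σ e} ≃
      ((SimpleGraph.fromEdgeSet (A : Set (Sym2 V))).ConnectedComponent → Fin q) := by
    refine
      { toFun := fun σ => SimpleGraph.ConnectedComponent.lift σ.1 ?_
        invFun := fun g =>
          ⟨fun x => g ((SimpleGraph.fromEdgeSet (A : Set (Sym2 V))).connectedComponentMk x), ?_⟩
        left_inv := ?_
        right_inv := ?_ }
    · intro a b p hp
      clear hp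
      induction p with
      | nil => rfl
      | cons hab _ ih =>
        rw [SimpleGraph.fromEdgeSet_adj] at hab
        exact (σ.2 _ (Finset.mem_coe.mp hab.1) _ (Sym2.mem_mk_left _ _) _
          (Sym2.mem_mk_right _ _)).trans ih
    · intro e he
      induction e using Sym2.ind with
      | _ i j =>
        have hij : i ≠ j := by
          intro h
          subst h
          exact (SimpleGraph.irrefl G) (G.mem_edgeSet.mp ((SimpleGraph.mem_edgeFinset).mp (hA he)))
        have hadj : (SimpleGraph.fromEdgeSet (A : Set (Sym2 V))).Adj i j :=
          (SimpleGraph.fromEdgeSet_adj _).mpr ⟨Finset.mem_coe.mpr he, hij⟩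
        have hc := SimpleGraph.ConnectedComponent.sound hadj.reachable
        intro x hx y hy
        rcases Sym2.mem_iff.mp hx with rfl | rfl <;>
          rcases Sym2.mem_iff.mp hy with rfl | rfl <;>
          simp [hc]
    · rintro ⟨σ, hσ⟩
      rfl
    · intro g
      funext c
      induction c using SimpleGraph.ConnectedComponent.ind with
      | _ x => rfl
  rw [Finset.sum_congr rfl fun σ (_ : σ ∈ Finset.univ) =>
    (mul_comm (v ^ A.card) _ : v ^ A.card * (if ∀ e ∈ A, P σ e then 1 else 0)
      = (if ∀ e ∈ A, P σ e then (1:R) else 0) * v ^ A.card)]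
  rw [← Finset.sum_mul, Finset.sum_boole]
  congr 1
  have : (Finset.univ.filter fun σ : V → Fin q => ∀ e ∈ A, P σ e).card
      = q ^ Nat.card (SimpleGraph.fromEdgeSet (A : Set (Sym2 V))).ConnectedComponent := by
    rw [← Fintype.card_subtype, ← Nat.card_eq_fintype_card, Nat.card_congr hequiv,
      Nat.card_fun]
    simp [Nat.card_eq_fintype_card]
  rw [this]
  push_cast
  ring
end

section
/- For all integers r ≥ 3, s ≥ 3 and t, the triangulation T(r,s,t) admits a proper 3-coloring if and only if r ≡ 0 (mod 3) and s − t ≡ 0 (mod 3). -/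
/-- The subgroup Λ of ℤ² generated by (r,0) and (−t,s). -/
def torusLattice (r s t : ℤ) : AddSubgroup (ℤ × ℤ) :=
  AddSubgroup.closure {(r, 0), (-t, s)}

/-- The vertex set ℤ²/Λ of the triangulation T(r,s,t). -/
abbrev TorusV (r s t : ℤ) := (ℤ × ℤ) ⧸ torusLattice r s t

/-- The quotient map ℤ² → ℤ²/Λ. -/
def tmk (r s t : ℤ) : (ℤ × ℤ) →+ TorusV r s t := QuotientAddGroup.mk' (torusLattice r s t)

/-- The six neighbour displacement vectors. -/
def hexDirs : Finset (ℤ × ℤ) := {(1,0), (-1,0), (0,1), (0,-1), (1,1), (-1,-1)}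

/-- The triangulation T(r,s,t) of the torus: two distinct vertices are adjacent
iff their difference is the image of one of the six displacement vectors. -/
def TriT (r s t : ℤ) : SimpleGraph (TorusV r s t) where
  Adj u v := u ≠ v ∧ ∃ d ∈ hexDirs, v - u = tmk r s t d
  symm := ⟨by
    rintro u v ⟨hne, d, hd, hsub⟩
    refine ⟨hne.symm, -d, ?_, ?_⟩
    · fin_cases hd <;> decide
    · rw [show u - v = -(v - u) from (neg_sub v u).symm, hsub, ← map_neg]⟩
  loopless := ⟨fun u h => h.1 rfl⟩

/-- A proper `q`-coloring of a simple graph. -/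
def IsProperColoring {V : Type*} (G : SimpleGraph V) {q : ℕ} (f : V → Fin q) : Prop :=
  ∀ ⦃u v : V⦄, G.Adj u v → f u ≠ f v

/-!
In a proper 3-colouring of the triangular lattice every triangle carries all three colours, and
three distinct elements of `ZMod 3` form an arithmetic progression. Comparing the two triangles
`z, z + (1,0), z + (1,1)` and `z, z + (0,1), z + (1,1)` shows that the colour increases by one and
the same `ε ≠ 0` along `(1,0)` and along `(0,1)`, at every vertex; so a proper 3-colouring of ℤ²
is `z ↦ c + ε (z₁ + z₂)`. Such a colouring descends to ℤ²/Λ exactly when `z₁ + z₂ ≡ 0 (mod 3)`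
on the generators `(r,0)` and `(-t,s)` of Λ.
-/

theorem ZMod.three_eq_of_ne_of_ne {x y a b : ZMod 3} (hxa : x ≠ a) (hxb : x ≠ b) (hya : y ≠ a)
    (hyb : y ≠ b) (hab : a ≠ b) : x = y := by
  revert x y a b; decide

theorem ZMod.three_sub_eq_sub_of_ne {x y z : ZMod 3} (hxy : y ≠ x) (hyz : z ≠ y) (hxz : z ≠ x) :
    y - x = z - y := by
  revert x y z; decide

open Function

section TriangularColoring

variable {G : Type*} [AddCommGroup G]

/-- `f` is a proper colouring of the graph on `G` with edges along `a`, `b` and `a + b`. -/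
structure IsTriangularColoring (a b : G) (f : G → ZMod 3) : Prop where
  ne_add_left : ∀ x, f (x + a) ≠ f x
  ne_add_right : ∀ x, f (x + b) ≠ f x
  ne_add_add : ∀ x, f (x + (a + b)) ≠ f x

namespace IsTriangularColoring

variable {a b : G} {f : G → ZMod 3}

theorem ne_add_add_of_add_left (hf : IsTriangularColoring a b f) (x : G) :
    f (x + (a + b)) ≠ f (x + a) := by
  rw [← add_assoc]; exact hf.ne_add_right (x + a)

theorem ne_add_add_of_add_right (hf : IsTriangularColoring a b f) (x : G) :
    f (x + (a + b)) ≠ f (x + b) := by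
  rw [add_comm a, ← add_assoc]; exact hf.ne_add_left (x + b)

theorem apply_add_left_eq_apply_add_right (hf : IsTriangularColoring a b f) (x : G) :
    f (x + a) = f (x + b) :=
  ZMod.three_eq_of_ne_of_ne (hf.ne_add_left x) (hf.ne_add_add_of_add_left x).symm
    (hf.ne_add_right x) (hf.ne_add_add_of_add_right x).symm (hf.ne_add_add x).symm

theorem sub_add_add_eq_add_left (hf : IsTriangularColoring a b f) (x : G) :
    f (x + (a + b)) - f (x + a) = f (x + a) - f x :=
  (ZMod.three_sub_eq_sub_of_ne (hf.ne_add_left x) (hf.ne_add_add_of_add_left x)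
    (hf.ne_add_add x)).symm

theorem sub_add_add_eq_add_right (hf : IsTriangularColoring a b f) (x : G) :
    f (x + (a + b)) - f (x + b) = f (x + b) - f x :=
  (ZMod.three_sub_eq_sub_of_ne (hf.ne_add_right x) (hf.ne_add_add_of_add_right x)
    (hf.ne_add_add x)).symm

theorem periodic_sub_left (hf : IsTriangularColoring a b f) :
    Periodic (fun x => f (x + a) - f x) a := fun x => by
  dsimp only
  rw [hf.apply_add_left_eq_apply_add_right (x + a), add_assoc, hf.sub_add_add_eq_add_left]

theorem periodic_sub_right (hf : IsTriangularColoring a b f) :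
    Periodic (fun x => f (x + a) - f x) b := fun x => by
  dsimp only
  rw [add_right_comm, add_assoc, hf.sub_add_add_eq_add_right,
    ← hf.apply_add_left_eq_apply_add_right]

end IsTriangularColoring

end TriangularColoring

theorem apply_eq_apply_zero_of_periodic {β : Type*} {f : ℤ × ℤ → β}
    (h₁ : Periodic f (1, 0)) (h₂ : Periodic f (0, 1)) (z : ℤ × ℤ) : f z = f 0 := by
  simpa using (h₁.zsmul z.1).add_period (h₂.zsmul z.2) 0

def standardColoring : ℤ × ℤ →+ ZMod 3 :=
  (Int.castAddHom (ZMod 3)).comp (AddMonoidHom.fst ℤ ℤ + AddMonoidHom.snd ℤ ℤ)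

theorem standardColoring_apply (z : ℤ × ℤ) : standardColoring z = ((z.1 + z.2 : ℤ) : ZMod 3) :=
  rfl

theorem standardColoring_ne_zero {d : ℤ × ℤ} (hd : d ∈ hexDirs) : standardColoring d ≠ 0 := by
  fin_cases hd <;> decide

theorem IsTriangularColoring.exists_eq_add_mul_standardColoring {f : ℤ × ℤ → ZMod 3}
    (hf : IsTriangularColoring (1, 0) (0, 1) f) :
    ∃ ε ≠ 0, ∀ z, f z = f 0 + ε * standardColoring z := by
  obtain ⟨ε, hε⟩ : ∃ ε, f (1, 0) - f 0 = ε := ⟨_, rfl⟩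
  have hstep_fst : ∀ z, f (z + (1, 0)) - f z = ε := fun z => by
    simpa [hε] using apply_eq_apply_zero_of_periodic hf.periodic_sub_left hf.periodic_sub_right z
  have hstep_snd : ∀ z, f (z + (0, 1)) - f z = ε := fun z => by
    rw [← hf.apply_add_left_eq_apply_add_right, hstep_fst]
  refine ⟨ε, by simpa [← hε, sub_eq_zero] using hf.ne_add_left 0, fun z => ?_⟩
  have hconst := apply_eq_apply_zero_of_periodic (f := fun z => f z - ε * standardColoring z)
    (fun z => by
      simp only [map_add, standardColoring_apply]; push_cast; linear_combination hstep_fst z)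
    (fun z => by
      simp only [map_add, standardColoring_apply]; push_cast; linear_combination hstep_snd z) z
  simp only [map_zero, mul_zero, sub_zero] at hconst
  linear_combination hconst

section Torus

variable {r s t : ℤ}

theorem mem_torusLattice_iff {p : ℤ × ℤ} :
    p ∈ torusLattice r s t ↔ ∃ m n : ℤ, m * r - n * t = p.1 ∧ n * s = p.2 := by
  simp only [torusLattice, AddSubgroup.mem_closure_pair, Prod.ext_iff, Prod.fst_add, Prod.snd_add,
    Prod.smul_mk, smul_eq_mul, mul_zero, zero_add, mul_neg, ← sub_eq_add_neg]

theorem tmk_eq_zero_iff {p : ℤ × ℤ} : tmk r s t p = 0 ↔ p ∈ torusLattice r s t :=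
  QuotientAddGroup.eq_zero_iff p

theorem tmk_ne_zero (hr : 1 < r) (hs : 1 < s) {d : ℤ × ℤ}
    (hd : d ∈ ({(1, 0), (0, 1), (1, 1)} : Finset (ℤ × ℤ))) : tmk r s t d ≠ 0 := by
  rw [Ne, tmk_eq_zero_iff, mem_torusLattice_iff]
  rintro ⟨m, n, h₁, h₂⟩
  simp only [Finset.mem_insert, Finset.mem_singleton] at hd
  rcases hd with rfl | rfl | rfl
  · obtain rfl : n = 0 := (mul_eq_zero.1 h₂).resolve_right (by omega)
    have := Int.eq_one_or_neg_one_of_mul_eq_one' (by simpa using h₁)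
    omega
  all_goals have := Int.eq_one_or_neg_one_of_mul_eq_one' h₂; omega

theorem triT_adj_add_tmk {d : ℤ × ℤ} (hd : d ∈ hexDirs) (hd₀ : tmk r s t d ≠ 0)
    (u : TorusV r s t) : (TriT r s t).Adj u (u + tmk r s t d) :=
  ⟨by simpa using hd₀, d, hd, add_sub_cancel_left u _⟩

theorem torusLattice_le_ker_standardColoring_iff :
    torusLattice r s t ≤ standardColoring.ker ↔ 3 ∣ r ∧ 3 ∣ s - t := by
  rw [torusLattice, AddSubgroup.closure_le, Set.insert_subset_iff, Set.singleton_subset_iff]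
  simp only [SetLike.mem_coe, AddMonoidHom.mem_ker, standardColoring_apply, add_zero,
    neg_add_eq_sub, ZMod.intCast_zmod_eq_zero_iff_dvd, Nat.cast_ofNat]

theorem IsProperColoring.isTriangularColoring_comp_tmk (hr : 1 < r) (hs : 1 < s)
    {f : TorusV r s t → ZMod 3} (hf : IsProperColoring (TriT r s t) f) :
    IsTriangularColoring (1, 0) (0, 1) (f ∘ tmk r s t) := by
  have hne : ∀ d ∈ ({(1, 0), (0, 1), (1, 1)} : Finset (ℤ × ℤ)), ∀ z,
      f (tmk r s t (z + d)) ≠ f (tmk r s t z) := fun d hd z => by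
    rw [map_add]
    exact (hf (triT_adj_add_tmk (by fin_cases hd <;> decide) (tmk_ne_zero hr hs hd) _)).symm
  exact ⟨hne _ (by decide), hne _ (by decide), hne _ (by decide)⟩

theorem IsProperColoring.torusLattice_le_ker (hr : 1 < r) (hs : 1 < s)
    {f : TorusV r s t → ZMod 3} (hf : IsProperColoring (TriT r s t) f) :
    torusLattice r s t ≤ standardColoring.ker := by
  obtain ⟨ε, hε, hf_eq⟩ :=
    (hf.isTriangularColoring_comp_tmk hr hs).exists_eq_add_mul_standardColoring
  intro z hz
  have h := hf_eq z
  rw [comp_apply, comp_apply, tmk_eq_zero_iff.2 hz, map_zero, left_eq_add] at h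
  exact (mul_eq_zero.1 h).resolve_left hε

theorem isProperColoring_lift_standardColoring (h : torusLattice r s t ≤ standardColoring.ker) :
    IsProperColoring (TriT r s t) (QuotientAddGroup.lift _ standardColoring h : _ → ZMod 3) := by
  rintro u v ⟨-, d, hd, hvu⟩ huv
  apply standardColoring_ne_zero hd
  calc standardColoring d = QuotientAddGroup.lift _ standardColoring h (tmk r s t d) :=
        (QuotientAddGroup.lift_mk' _ h d).symm
    _ = 0 := by rw [← hvu, map_sub, huv, sub_self]

end Torus

/-- The triangulation T(r,s,t) admits a proper 3-coloring if and only if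
`r ≡ 0 (mod 3)` and `s − t ≡ 0 (mod 3)`. -/
theorem threeColorable_iff (r s t : ℤ) (hr : 3 ≤ r) (hs : 3 ≤ s) :
    (∃ f : TorusV r s t → Fin 3, IsProperColoring (TriT r s t) f) ↔
      (3 : ℤ) ∣ r ∧ (3 : ℤ) ∣ (s - t) := by
  rw [← torusLattice_le_ker_standardColoring_iff]
  constructor
  · rintro ⟨f, hf⟩
    -- `ZMod 3` is `Fin 3` by definition, so `f` is a `ZMod 3`-valued colouring.
    exact hf.torusLattice_le_ker (by omega) (by omega)
  · intro h
    exact ⟨_, isProperColoring_lift_standardColoring h⟩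
end

section
/- Let G be a finite bipartite simple graph (i.e., G admits a proper 2-coloring) and let q ≥ 2 be an integer. Then any two proper q-colorings of G are Kempe equivalent. -/
open Classical in
/-- A single Kempe change: interchange two colors `a ≠ b` on one connected
component of the subgraph induced on the vertices colored `a` or `b`. -/
def KempeStep {V : Type*} (G : SimpleGraph V) {q : ℕ} (f g : V → Fin q) : Prop :=
  ∃ a b : Fin q, a ≠ b ∧
    ∃ C : (G.induce {v | f v = a ∨ f v = b}).ConnectedComponent,
      ∀ v : V,
        g v = if h : f v = a ∨ f v = b then
                if (G.induce {v | f v = a ∨ f v = b}).connectedComponentMk ⟨v, h⟩ = C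
                then Equiv.swap a b (f v) else f v
              else f v

/-- Kempe equivalence: one coloring is obtained from the other by a finite
sequence of Kempe changes. -/
def KempeEquiv {V : Type*} (G : SimpleGraph V) {q : ℕ} (f g : V → Fin q) : Prop :=
  Relation.ReflTransGen (KempeStep G) f g

/-! Fix a proper 2-coloring `c` and view it as a proper `q`-coloring `t` with colors `0, 1`.
If a proper `f` differs from `t` at `v₀`, swap `a = f v₀` and `b = t v₀` on the `a`/`b`-component
`K` of `v₀`. Along any walk in `K` both `f` and `t` alternate between two colors, so `f` and `t`
disagree everywhere on `K`: the change repairs `v₀` and spoils no vertex, so the number of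
disagreements drops. Thus every proper coloring reaches `t`, and Kempe changes are reversible. -/

open SimpleGraph Finset

theorem SimpleGraph.Reachable.eq_iff_eq_of_two_colors {W α β : Type*} {H : SimpleGraph W}
    {φ : W → α} {ψ : W → β} {a₁ a₂ : α} {b₁ b₂ : β}
    (hφ : ∀ ⦃u w⦄, H.Adj u w → φ u ≠ φ w) (hψ : ∀ ⦃u w⦄, H.Adj u w → ψ u ≠ ψ w)
    (hφ₂ : ∀ u, φ u = a₁ ∨ φ u = a₂) (hψ₂ : ∀ u, ψ u = b₁ ∨ ψ u = b₂)
    {x y : W} (hxy : H.Reachable x y) : φ x = φ y ↔ ψ x = ψ y := by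
  obtain ⟨p⟩ := hxy
  induction p with
  | nil => simp
  | @cons x w y hxw p ih =>
    have := hφ hxw
    have := hψ hxw
    grind

theorem SimpleGraph.induce_connectedComponentMk_eq_iff_of_eq {V : Type*} {G : SimpleGraph V}
    {S T : Set V} (hST : S = T) {u v : V} (huS : u ∈ S) (hvS : v ∈ S) (huT : u ∈ T) (hvT : v ∈ T) :
    (G.induce S).connectedComponentMk ⟨u, huS⟩ = (G.induce S).connectedComponentMk ⟨v, hvS⟩ ↔
      (G.induce T).connectedComponentMk ⟨u, huT⟩ = (G.induce T).connectedComponentMk ⟨v, hvT⟩ := by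
  subst hST
  rfl

section
variable {V : Type*} {G : SimpleGraph V} {q : ℕ}

abbrev kempeGraph (G : SimpleGraph V) (f : V → Fin q) (a b : Fin q) :
    SimpleGraph {v | f v = a ∨ f v = b} :=
  G.induce {v | f v = a ∨ f v = b}

open Classical in
noncomputable def kempeChange (G : SimpleGraph V) (f : V → Fin q) (a b : Fin q)
    (C : (kempeGraph G f a b).ConnectedComponent) (v : V) : Fin q :=
  if h : f v = a ∨ f v = b then
    if (kempeGraph G f a b).connectedComponentMk ⟨v, h⟩ = C then Equiv.swap a b (f v) else f v
  else f v

theorem kempeStep_iff {f g : V → Fin q} :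
    KempeStep G f g ↔ ∃ a b, a ≠ b ∧ ∃ C, g = kempeChange G f a b C := by
  simp only [KempeStep, funext_iff]
  rfl

section kempeChange
variable {f : V → Fin q} {a b : Fin q} {C : (kempeGraph G f a b).ConnectedComponent} {v : V}

theorem kempeChange_apply_of_not_eq_or_eq (hv : ¬(f v = a ∨ f v = b)) :
    kempeChange G f a b C v = f v :=
  dif_neg hv

theorem kempeChange_apply_of_ne (hv : f v = a ∨ f v = b)
    (hC : (kempeGraph G f a b).connectedComponentMk ⟨v, hv⟩ ≠ C) :
    kempeChange G f a b C v = f v := by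
  simp only [kempeChange, dif_pos hv, if_neg hC]

theorem kempeChange_apply_of_eq (hv : f v = a ∨ f v = b)
    (hC : (kempeGraph G f a b).connectedComponentMk ⟨v, hv⟩ = C) :
    kempeChange G f a b C v = Equiv.swap a b (f v) := by
  simp only [kempeChange, dif_pos hv, if_pos hC]

theorem kempeChange_eq_or_eq_iff :
    (kempeChange G f a b C v = a ∨ kempeChange G f a b C v = b) ↔ (f v = a ∨ f v = b) := by
  by_cases hv : f v = a ∨ f v = b
  · by_cases hC : (kempeGraph G f a b).connectedComponentMk ⟨v, hv⟩ = C
    · simp only [kempeChange_apply_of_eq hv hC, Equiv.swap_apply_eq_iff, Equiv.swap_apply_left,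
        Equiv.swap_apply_right, or_comm]
    · rw [kempeChange_apply_of_ne hv hC]
  · rw [kempeChange_apply_of_not_eq_or_eq hv]

end kempeChange

theorem IsProperColoring.kempeChange {f : V → Fin q} (hf : IsProperColoring G f) (a b : Fin q)
    (C : (kempeGraph G f a b).ConnectedComponent) : IsProperColoring G (kempeChange G f a b C) := by
  intro u w huw
  by_cases hu : f u = a ∨ f u = b <;> by_cases hw : f w = a ∨ f w = b
  · have hcomp : (kempeGraph G f a b).connectedComponentMk ⟨u, hu⟩ =
        (kempeGraph G f a b).connectedComponentMk ⟨w, hw⟩ :=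
      ConnectedComponent.sound (Adj.reachable (G := kempeGraph G f a b) huw)
    by_cases hC : (kempeGraph G f a b).connectedComponentMk ⟨w, hw⟩ = C
    · rw [kempeChange_apply_of_eq hu (hcomp.trans hC), kempeChange_apply_of_eq hw hC]
      exact (Equiv.swap a b).injective.ne (hf huw)
    · rw [kempeChange_apply_of_ne hu (hcomp ▸ hC), kempeChange_apply_of_ne hw hC]
      exact hf huw
  · rw [kempeChange_apply_of_not_eq_or_eq hw]
    exact fun h => hw (h ▸ kempeChange_eq_or_eq_iff.2 hu)
  · rw [kempeChange_apply_of_not_eq_or_eq hu]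
    exact fun h => hu (h ▸ kempeChange_eq_or_eq_iff.2 hw)
  · rw [kempeChange_apply_of_not_eq_or_eq hu, kempeChange_apply_of_not_eq_or_eq hw]
    exact hf huw

theorem KempeStep.symm {f g : V → Fin q} (h : KempeStep G f g) : KempeStep G g f := by
  obtain ⟨a, b, hab, C, hg⟩ := kempeStep_iff.1 h
  obtain ⟨⟨x, hx⟩, hxC⟩ : ∃ x, (kempeGraph G f a b).connectedComponentMk x = C := C.exists_rep
  have hmem : ∀ v, (g v = a ∨ g v = b) ↔ (f v = a ∨ f v = b) := hg ▸ fun _ =>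
    kempeChange_eq_or_eq_iff
  have hxg : g x = a ∨ g x = b := (hmem x).2 hx
  refine kempeStep_iff.2 ⟨a, b, hab, (kempeGraph G g a b).connectedComponentMk ⟨x, hxg⟩,
    funext fun v => ?_⟩
  by_cases hv : f v = a ∨ f v = b
  · have hvg : g v = a ∨ g v = b := (hmem v).2 hv
    have hS : {v | g v = a ∨ g v = b} = {v | f v = a ∨ f v = b} := Set.ext hmem
    have hcomp := induce_connectedComponentMk_eq_iff_of_eq (G := G) hS hvg hxg hv hx
    rw [hxC] at hcomp
    by_cases hC : (kempeGraph G f a b).connectedComponentMk ⟨v, hv⟩ = C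
    · rw [kempeChange_apply_of_eq hvg (hcomp.2 hC), hg, kempeChange_apply_of_eq hv hC,
        Equiv.swap_apply_self]
    · rw [kempeChange_apply_of_ne hvg (mt hcomp.1 hC), hg, kempeChange_apply_of_ne hv hC]
  · rw [kempeChange_apply_of_not_eq_or_eq (mt (hmem v).1 hv), hg,
      kempeChange_apply_of_not_eq_or_eq hv]

instance : Std.Symm (KempeStep G (q := q)) := ⟨fun _ _ => KempeStep.symm⟩

theorem KempeEquiv.symm {f g : V → Fin q} (h : KempeEquiv G f g) : KempeEquiv G g f :=
  Std.Symm.symm (r := Relation.ReflTransGen (KempeStep G)) _ _ h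

section Descent
variable {f t : V → Fin q} {c₀ c₁ : Fin q}

theorem IsProperColoring.ne_of_connectedComponentMk_eq (hf : IsProperColoring G f)
    (ht : IsProperColoring G t) (ht₂ : ∀ v, t v = c₀ ∨ t v = c₁) {v₀ v : V}
    (hv₀ : f v₀ ≠ t v₀) (hv : f v = f v₀ ∨ f v = t v₀)
    (hC : (kempeGraph G f (f v₀) (t v₀)).connectedComponentMk ⟨v, hv⟩ =
      (kempeGraph G f (f v₀) (t v₀)).connectedComponentMk ⟨v₀, Or.inl rfl⟩) :
    f v ≠ t v := by
  have key : f v = f v₀ ↔ t v = t v₀ :=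
    (ConnectedComponent.exact hC).eq_iff_eq_of_two_colors (φ := f ∘ Subtype.val)
      (ψ := t ∘ Subtype.val) (fun _ _ h => hf h) (fun _ _ h => ht h) (fun x => x.2)
      (fun x => ht₂ x.1)
  grind

theorem exists_kempeStep_card_lt [Fintype V] (hf : IsProperColoring G f)
    (ht : IsProperColoring G t) (ht₂ : ∀ v, t v = c₀ ∨ t v = c₁) (hne : f ≠ t) :
    ∃ g, KempeStep G f g ∧ IsProperColoring G g ∧ #{v | g v ≠ t v} < #{v | f v ≠ t v} := by
  obtain ⟨v₀, hv₀⟩ := Function.ne_iff.1 hne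
  set C := (kempeGraph G f (f v₀) (t v₀)).connectedComponentMk ⟨v₀, Or.inl rfl⟩
  refine ⟨kempeChange G f (f v₀) (t v₀) C, kempeStep_iff.2 ⟨_, _, hv₀, C, rfl⟩,
    hf.kempeChange _ _ C, card_lt_card ?_⟩
  have hsub : ({v | kempeChange G f (f v₀) (t v₀) C v ≠ t v} : Finset V) ⊆
      ({v | f v ≠ t v} : Finset V) := by
    intro v
    simp only [mem_filter, mem_univ, true_and]
    refine mt fun hfv => ?_
    by_cases hv : f v = f v₀ ∨ f v = t v₀
    · have hC : (kempeGraph G f (f v₀) (t v₀)).connectedComponentMk ⟨v, hv⟩ ≠ C :=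
        fun hC => hf.ne_of_connectedComponentMk_eq ht ht₂ hv₀ hv hC hfv
      rw [kempeChange_apply_of_ne hv hC, hfv]
    · rw [kempeChange_apply_of_not_eq_or_eq hv, hfv]
  refine (ssubset_iff_of_subset hsub).2 ⟨v₀, by simpa using hv₀, ?_⟩
  simp only [mem_filter, mem_univ, true_and, not_not]
  rw [kempeChange_apply_of_eq (Or.inl rfl) rfl, Equiv.swap_apply_left]

theorem kempeEquiv_of_forall_eq_or_eq [Fintype V] (hf : IsProperColoring G f)
    (ht : IsProperColoring G t) (ht₂ : ∀ v, t v = c₀ ∨ t v = c₁) : KempeEquiv G f t := by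
  induction hn : #{v | f v ≠ t v} using Nat.strong_induction_on generalizing f with
  | _ n ih =>
  by_cases hne : f = t
  · exact hne ▸ .refl
  obtain ⟨g, hfg, hg, hlt⟩ := exists_kempeStep_card_lt hf ht ht₂ hne
  exact .head hfg (ih _ (hn ▸ hlt) hg rfl)

end Descent

end

/-- On a finite bipartite simple graph (i.e. one admitting a proper 2-coloring),
any two proper `q`-colorings (`q ≥ 2`) are Kempe equivalent. -/
theorem kempeEquiv_of_bipartite {V : Type*} [Fintype V] (G : SimpleGraph V)
    (hbip : ∃ c : V → Fin 2, IsProperColoring G c)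
    (q : ℕ) (hq : 2 ≤ q) (f g : V → Fin q)
    (hf : IsProperColoring G f) (hg : IsProperColoring G g) :
    KempeEquiv G f g := by
  obtain ⟨c, hc⟩ := hbip
  let t : V → Fin q := fun v => Fin.castLE hq (c v)
  have ht : IsProperColoring G t := fun _ _ huv => (Fin.castLE_injective hq).ne (hc huv)
  have ht₂ : ∀ v, t v = Fin.castLE hq 0 ∨ t v = Fin.castLE hq 1 := fun v => by
    rcases Fin.exists_fin_two.1 ⟨c v, rfl⟩ with h | h <;> simp [t, h]
  exact .trans (kempeEquiv_of_forall_eq_or_eq hf ht ht₂)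
    (kempeEquiv_of_forall_eq_or_eq hg ht ht₂).symm
end

section
/- Let G be a finite simple graph with maximum degree Δ. If q ≥ Δ + 1 is an integer, then any two proper q-colorings of G are Kempe equivalent. Moreover, if G is connected and contains a vertex of degree strictly less than Δ, then any two proper Δ-colorings of G are Kempe equivalent. -/
/-!
Las Vergnas–Meyniel: if `G` is `k`-degenerate and `q > k`, all proper `q`-colourings of `G` are
Kempe equivalent. Induct on `G`: delete the edges at a non-isolated vertex `v` of degree at most
`k`. A Kempe change of `G - v` lifts to Kempe changes of `G` agreeing with it off `v`. Indeed, if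
`v` is coloured `a` and has two neighbours coloured `b`, its neighbourhood misses a colour
`c ∉ {a, b}` (as `deg v < q`), and `v` is first recoloured `c`; afterwards `v` has at most one
neighbour in the `a`/`b`-subgraph, so removing `v` splits no Kempe chain. At the end the two
colourings differ at `v` only, and recolouring `v` is itself a Kempe change.

The graphs of the theorem are `Δ`-degenerate, and `(Δ - 1)`-degenerate when connected with a
vertex of degree `< Δ`: a vertex set `W` either contains that vertex or, by connectedness, a vertex
with a neighbour outside `W`.
-/

namespace SimpleGraph

variable {V : Type*} {q : ℕ}

lemma eq_of_reachable_of_forall_not_adj {K : SimpleGraph V} {x y : V}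
    (hx : ∀ w, ¬K.Adj x w) (h : K.Reachable x y) : x = y := by
  obtain ⟨p⟩ := h
  cases p with
  | nil => rfl
  | cons hadj _ => exact absurd hadj (hx _)

lemma reachable_deleteIncidenceSet_iff {K : SimpleGraph V} {v x y : V}
    (hv : (K.neighborSet v).Subsingleton) (hx : x ≠ v) (hy : y ≠ v) :
    (K.deleteIncidenceSet v).Reachable x y ↔ K.Reachable x y := by
  refine ⟨fun h => h.mono (K.deleteIncidenceSet_le v), fun ⟨p⟩ => ?_⟩
  -- A walk through `v` enters and leaves it by the same edge, so that detour can be cut out.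
  suffices ∀ {s y : V} (p : K.Walk s y), y ≠ v → ∀ u, u ≠ v → (u = s ∨ s = v ∧ K.Adj v u) →
      (K.deleteIncidenceSet v).Reachable u y from this p hy x hx (.inl rfl)
  intro s y p hy
  induction p with
  | nil =>
    rintro u hu (rfl | ⟨rfl, -⟩)
    · rfl
    · exact absurd rfl hy
  | @cons s z _ hsz _ ih =>
    rintro u hu (rfl | ⟨rfl, hvu⟩)
    · by_cases hz : z = v
      · exact ih hy u hu (.inr ⟨hz, hz ▸ hsz.symm⟩)
      · exact (Adj.reachable (deleteIncidenceSet_adj.2 ⟨hsz, hu, hz⟩)).trans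
          (ih hy z hz (.inl rfl))
    · exact ih hy u hu (.inl (hv hvu hsz))

variable (G : SimpleGraph V) (f : V → Fin q) (a b : Fin q)

/-- Unlike `G.induce {v | f v = a ∨ f v = b}`, this graph lives on all of `V`, the vertices of
other colours being isolated; its components through `a`- or `b`-coloured vertices are the Kempe
chains. -/
@[simps]
def kempeGraph : SimpleGraph V where
  Adj u w := G.Adj u w ∧ (f u = a ∨ f u = b) ∧ (f w = a ∨ f w = b)
  symm := ⟨fun _ _ h => ⟨h.1.symm, h.2.2, h.2.1⟩⟩
  loopless := ⟨fun _ h => G.irrefl h.1⟩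

open Classical in
noncomputable def kempeSwap (x : V) : V → Fin q := fun v =>
  if (G.kempeGraph f a b).Reachable x v then Equiv.swap a b (f v) else f v

variable {G f a b}

lemma induce_reachable_iff_reachable_kempeGraph {u w : V} (hu : f u = a ∨ f u = b)
    (hw : f w = a ∨ f w = b) :
    (G.induce {v | f v = a ∨ f v = b}).Reachable ⟨u, hu⟩ ⟨w, hw⟩ ↔
      (G.kempeGraph f a b).Reachable u w := by
  constructor
  · let φ : G.induce {v | f v = a ∨ f v = b} →g G.kempeGraph f a b :=
      ⟨Subtype.val, fun {u w} h => ⟨induce_adj.1 h, u.2, w.2⟩⟩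
    exact fun h => h.map φ
  · rintro ⟨p⟩
    induction p with
    | nil => rfl
    | cons h _ ih =>
      exact (Adj.reachable (induce_adj.2 h.1 : (G.induce _).Adj ⟨_, hu⟩ ⟨_, h.2.2⟩)).trans
        (ih _ hw)

lemma kempeSwap_of_ne {x v : V} (ha : f v ≠ a) (hb : f v ≠ b) : G.kempeSwap f a b x v = f v := by
  unfold kempeSwap
  split_ifs <;> simp [Equiv.swap_apply_of_ne_of_ne ha hb]

open Classical in
lemma kempeSwap_apply {x : V} (hx : f x = a ∨ f x = b) (v : V) :
    G.kempeSwap f a b x v =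
      if h : f v = a ∨ f v = b then
        if (G.induce {v | f v = a ∨ f v = b}).connectedComponentMk ⟨v, h⟩ =
          (G.induce {v | f v = a ∨ f v = b}).connectedComponentMk ⟨x, hx⟩
        then Equiv.swap a b (f v) else f v
      else f v := by
  by_cases hv : f v = a ∨ f v = b
  · rw [dif_pos hv, ConnectedComponent.eq, induce_reachable_iff_reachable_kempeGraph,
      reachable_comm]
    rfl
  · rw [dif_neg hv]
    push Not at hv
    exact kempeSwap_of_ne hv.1 hv.2

lemma kempeGraph_deleteIncidenceSet {g : V → Fin q} {v : V} (hfg : ∀ y ≠ v, f y = g y) :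
    (G.deleteIncidenceSet v).kempeGraph g a b = (G.kempeGraph f a b).deleteIncidenceSet v := by
  ext u w
  simp only [kempeGraph_adj, deleteIncidenceSet_adj]
  by_cases hu : u = v
  · simp [hu]
  by_cases hw : w = v
  · simp [hw]
  simp [hfg u hu, hfg w hw, hu, hw]

end SimpleGraph

section

open SimpleGraph Function

variable {V : Type*} {q : ℕ} {G : SimpleGraph V} {f g : V → Fin q} {a b : Fin q}

theorem KempeStep.exists_eq_kempeSwap (h : KempeStep G f g) :
    ∃ a b x, a ≠ b ∧ (f x = a ∨ f x = b) ∧ g = G.kempeSwap f a b x := by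
  obtain ⟨a, b, hab, C, hg⟩ := h
  obtain ⟨⟨x, hx⟩, rfl⟩ := C.exists_rep
  exact ⟨a, b, x, hab, hx, funext fun v => (hg v).trans (kempeSwap_apply hx v).symm⟩

theorem kempeStep_kempeSwap (hab : a ≠ b) {x : V} (hx : f x = a ∨ f x = b) :
    KempeStep G f (G.kempeSwap f a b x) :=
  ⟨a, b, hab, _, kempeSwap_apply hx⟩

theorem IsProperColoring.kempeSwap (hf : IsProperColoring G f) (a b : Fin q) (x : V) :
    IsProperColoring G (G.kempeSwap f a b x) := by
  -- The ends of an edge leaving the swapped chain cannot both be coloured `a` or `b`.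
  have leaving : ∀ {u w}, G.Adj u w → (G.kempeGraph f a b).Reachable x u →
      ¬(G.kempeGraph f a b).Reachable x w → Equiv.swap a b (f u) ≠ f w := by
    intro u w huw hu hw
    by_cases hw' : f w = a ∨ f w = b
    · have hu' : ¬(f u = a ∨ f u = b) := fun hu' => hw (hu.trans (Adj.reachable ⟨huw, hu', hw'⟩))
      push Not at hu'
      rw [Equiv.swap_apply_of_ne_of_ne hu'.1 hu'.2]
      exact hf huw
    · push Not at hw'
      rw [← Equiv.swap_apply_of_ne_of_ne hw'.1 hw'.2]
      exact (Equiv.injective _).ne (hf huw)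
  intro u w huw
  unfold SimpleGraph.kempeSwap
  split_ifs with hu hw hw
  · exact (Equiv.injective _).ne (hf huw)
  · exact leaving huw hu hw
  · exact (leaving huw.symm hw hu).symm
  · exact hf huw

theorem update_eq_kempeSwap [DecidableEq V] (hf : IsProperColoring G f) {v : V} {c : Fin q}
    (hc : ∀ u, G.Adj v u → f u ≠ c) : update f v c = G.kempeSwap f (f v) c v := by
  have hiso : ∀ u, ¬(G.kempeGraph f (f v) c).Adj v u :=
    fun u ⟨hvu, _, hu⟩ => hu.elim (fun h => hf hvu h.symm) (hc u hvu)
  funext y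
  by_cases hy : y = v
  · subst hy
    simp [SimpleGraph.kempeSwap]
  · rw [update_of_ne hy, SimpleGraph.kempeSwap,
      if_neg fun h => hy (eq_of_reachable_of_forall_not_adj hiso h).symm]

theorem IsProperColoring.update [DecidableEq V] (hf : IsProperColoring G f) {v : V} {c : Fin q}
    (hc : ∀ u, G.Adj v u → f u ≠ c) : IsProperColoring G (update f v c) :=
  update_eq_kempeSwap hf hc ▸ hf.kempeSwap _ _ _

theorem kempeEquiv_update [DecidableEq V] (hf : IsProperColoring G f) {v : V} {c : Fin q}
    (hc : ∀ u, G.Adj v u → f u ≠ c) : KempeEquiv G f (update f v c) := by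
  rcases eq_or_ne (f v) c with rfl | hne
  · rw [update_eq_self]
    exact .refl
  · rw [update_eq_kempeSwap hf hc]
    exact .single (kempeStep_kempeSwap hne (.inl rfl))

theorem kempeEquiv_of_forall_ne_eq (hf : IsProperColoring G f) (hg : IsProperColoring G g)
    {v : V} (hfg : ∀ y ≠ v, f y = g y) : KempeEquiv G f g := by
  classical
  have hg_eq : g = update f v (g v) := by
    funext y
    by_cases hy : y = v
    · simp [hy]
    · rw [update_of_ne hy, hfg y hy]
  rw [hg_eq]
  exact kempeEquiv_update hf fun u hvu => hfg u (G.ne_of_adj hvu).symm ▸ hg hvu.symm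

theorem kempeEquiv_bot [Finite V] (f g : V → Fin q) : KempeEquiv (⊥ : SimpleGraph V) f g := by
  classical
  have := Fintype.ofFinite V
  suffices ∀ (s : Finset V) (f : V → Fin q), (∀ y ∉ s, f y = g y) → KempeEquiv ⊥ f g from
    this Finset.univ f (by simp)
  have proper : ∀ h : V → Fin q, IsProperColoring (⊥ : SimpleGraph V) h := fun _ _ _ h => h.elim
  intro s
  induction s using Finset.induction_on with
  | empty => exact fun f hf => funext (fun y => hf y (Finset.notMem_empty y)) ▸ .refl
  | insert v s _ ih =>
    intro f hf
    refine (kempeEquiv_of_forall_ne_eq (v := v) (proper f) (proper (update f v (g v)))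
      fun y hy => (update_of_ne hy _ _).symm).trans (ih _ fun y hy => ?_)
    by_cases hyv : y = v
    · simp [hyv]
    · rw [update_of_ne hyv]
      exact hf y (by simp [hyv, hy])

theorem IsProperColoring.of_le {G' : SimpleGraph V} (hG : G' ≤ G) (hf : IsProperColoring G f) :
    IsProperColoring G' f :=
  fun _ _ h => hf (hG h)

theorem exists_forall_adj_ne_of_ncard_neighborSet_lt [Finite V] {v u₁ u₂ : V}
    (hv : (G.neighborSet v).ncard < q) (h₁ : G.Adj v u₁) (h₂ : G.Adj v u₂) (hne : u₁ ≠ u₂)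
    (h12 : f u₁ = f u₂) : ∃ c, c ≠ f v ∧ ∀ u, G.Adj v u → f u ≠ c := by
  set N := G.neighborSet v
  have hcover : f '' N ⊆ f '' (N \ {u₂}) := by
    rintro _ ⟨u, hu, rfl⟩
    by_cases h : u = u₂
    · exact ⟨u₁, ⟨h₁, hne⟩, h ▸ h12⟩
    · exact ⟨u, ⟨hu, h⟩, rfl⟩
  have hcard : (insert (f v) (f '' N)).ncard < Nat.card (Fin q) := calc
    _ ≤ (f '' N).ncard + 1 := Set.ncard_insert_le _ _
    _ ≤ (f '' (N \ {u₂})).ncard + 1 := Nat.add_le_add_right (Set.ncard_le_ncard hcover) 1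
    _ ≤ (N \ {u₂}).ncard + 1 := Nat.add_le_add_right Set.ncard_image_le 1
    _ = N.ncard := Set.ncard_sdiff_singleton_add_one h₂
    _ < _ := by simpa using hv
  obtain ⟨c, hc⟩ := (Set.ne_univ_iff_exists_notMem (insert (f v) (f '' N))).1 fun h =>
    hcard.ne (by rw [h, Set.ncard_univ])
  exact ⟨c, fun h => hc (h ▸ Set.mem_insert c _),
    fun u hu h => hc (Set.mem_insert_of_mem _ ⟨u, hu, h⟩)⟩

theorem exists_kempeEquiv_subsingleton_neighborSet_kempeGraph [Finite V]
    (hf : IsProperColoring G f) {v : V} (hv : (G.neighborSet v).ncard < q) (a b : Fin q) :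
    ∃ f₁, IsProperColoring G f₁ ∧ KempeEquiv G f f₁ ∧ (∀ y ≠ v, f₁ y = f y) ∧
      ((G.kempeGraph f₁ a b).neighborSet v).Subsingleton := by
  classical
  by_cases hsub : ((G.kempeGraph f a b).neighborSet v).Subsingleton
  · exact ⟨f, hf, .refl, fun _ _ => rfl, hsub⟩
  -- Then `v` and two of its neighbours use both colours `a`, `b`, so the neighbours of `v` miss a
  -- colour other than `a`, `b`, and `v` can be recoloured with it.
  obtain ⟨u₁, ⟨hvu₁, hv', hu₁⟩, u₂, ⟨hvu₂, -, hu₂⟩, hne⟩ := Set.not_subsingleton_iff.1 hsub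
  have h12 : f u₁ = f u₂ := by
    have := hf hvu₁; have := hf hvu₂; grind
  obtain ⟨c, hcv, hc⟩ := exists_forall_adj_ne_of_ncard_neighborSet_lt hv hvu₁ hvu₂ hne h12
  have hcab : ¬(c = a ∨ c = b) := by
    have := hf hvu₁; have := hc u₁ hvu₁; grind
  refine ⟨update f v c, hf.update hc, kempeEquiv_update hf hc, fun y hy => update_of_ne hy _ _, ?_⟩
  intro w hw
  exact absurd (by simpa using hw.2.1) hcab

theorem KempeStep.lift_deleteIncidenceSet [Finite V] {v : V} (hv : (G.neighborSet v).ncard < q)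
    {H : V → Fin q} (hH : IsProperColoring G H) (hHf : ∀ y ≠ v, H y = f y)
    (h : KempeStep (G.deleteIncidenceSet v) f g) :
    ∃ H', IsProperColoring G H' ∧ KempeEquiv G H H' ∧ ∀ y ≠ v, H' y = g y := by
  obtain ⟨a, b, x, hab, hx, rfl⟩ := h.exists_eq_kempeSwap
  obtain ⟨H₁, hH₁, hHH₁, hH₁H, hleaf⟩ :=
    exists_kempeEquiv_subsingleton_neighborSet_kempeGraph hH hv a b
  have hH₁f : ∀ y ≠ v, H₁ y = f y := fun y hy => (hH₁H y hy).trans (hHf y hy)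
  by_cases hxv : x = v
  · subst hxv
    refine ⟨H₁, hH₁, hHH₁, fun y hy => ?_⟩
    rw [SimpleGraph.kempeSwap, if_neg, hH₁f y hy]
    refine fun hxy => hy (eq_of_reachable_of_forall_not_adj (fun w hw => ?_) hxy).symm
    exact (deleteIncidenceSet_adj.1 hw.1).2.1 rfl
  · refine ⟨G.kempeSwap H₁ a b x, hH₁.kempeSwap a b x,
      hHH₁.tail (kempeStep_kempeSwap hab (hH₁f x hxv ▸ hx)), fun y hy => ?_⟩
    rw [SimpleGraph.kempeSwap, SimpleGraph.kempeSwap, kempeGraph_deleteIncidenceSet hH₁f,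
      reachable_deleteIncidenceSet_iff hleaf hxv hy, hH₁f y hy]

theorem KempeEquiv.lift_deleteIncidenceSet [Finite V] {v : V} (hv : (G.neighborSet v).ncard < q)
    {H : V → Fin q} (hH : IsProperColoring G H) (hHf : ∀ y ≠ v, H y = f y)
    (h : KempeEquiv (G.deleteIncidenceSet v) f g) :
    ∃ H', IsProperColoring G H' ∧ KempeEquiv G H H' ∧ ∀ y ≠ v, H' y = g y := by
  induction h with
  | refl => exact ⟨H, hH, .refl, hHf⟩
  | tail _ hstep ih =>
    obtain ⟨H₁, hH₁, hHH₁, hH₁f⟩ := ih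
    obtain ⟨H₂, hH₂, hH₁H₂, hH₂g⟩ := hstep.lift_deleteIncidenceSet hv hH₁ hH₁f
    exact ⟨H₂, hH₂, hHH₁.trans hH₁H₂, hH₂g⟩

theorem KempeEquiv.of_deleteIncidenceSet [Finite V] {v : V} (hv : (G.neighborSet v).ncard < q)
    (hf : IsProperColoring G f) (hg : IsProperColoring G g)
    (h : KempeEquiv (G.deleteIncidenceSet v) f g) : KempeEquiv G f g := by
  obtain ⟨H, hH, hfH, hHg⟩ := h.lift_deleteIncidenceSet hv hf fun _ _ => rfl
  exact hfH.trans (kempeEquiv_of_forall_ne_eq hH hg hHg)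

namespace SimpleGraph

def Degenerate (G : SimpleGraph V) (k : ℕ) : Prop :=
  ∀ W : Set V, W.Nonempty → ∃ u ∈ W, (G.neighborSet u ∩ W).ncard ≤ k

theorem Degenerate.mono [Finite V] {G' : SimpleGraph V} {k : ℕ} (hG : G' ≤ G)
    (h : G.Degenerate k) : G'.Degenerate k := by
  intro W hW
  obtain ⟨u, hu, hk⟩ := h W hW
  exact ⟨u, hu,
    (Set.ncard_le_ncard (Set.inter_subset_inter_left W (neighborSet_mono hG u))).trans hk⟩

theorem Degenerate.kempeEquiv [Finite V] {k : ℕ} (hG : G.Degenerate k) (hkq : k < q)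
    (hf : IsProperColoring G f) (hg : IsProperColoring G g) : KempeEquiv G f g := by
  induction G using WellFoundedLT.induction generalizing f g with
  | _ G ih =>
  rcases eq_or_ne G ⊥ with rfl | hne
  · exact kempeEquiv_bot f g
  obtain ⟨u₀, w₀, h₀⟩ := ne_bot_iff_exists_adj.1 hne
  -- Degeneracy applied to the non-isolated vertices gives a vertex `v` with between `1` and `k`
  -- neighbours; its edges are deleted.
  obtain ⟨v, ⟨w, hvw⟩, hv⟩ := hG {u | ∃ w, G.Adj u w} ⟨u₀, w₀, h₀⟩
  have hN : G.neighborSet v ⊆ {u | ∃ w, G.Adj u w} := fun u (hu : G.Adj v u) => ⟨v, hu.symm⟩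
  rw [Set.inter_eq_left.2 hN] at hv
  have hlt : G.deleteIncidenceSet v < G := (deleteIncidenceSet_le G v).lt_of_ne fun h =>
    (deleteIncidenceSet_adj.1 (h.symm ▸ hvw : (G.deleteIncidenceSet v).Adj v w)).2.1 rfl
  have hle := deleteIncidenceSet_le G v
  exact (ih _ hlt (hG.mono hle) (hf.of_le hle) (hg.of_le hle)).of_deleteIncidenceSet
    (hv.trans_lt hkq) hf hg

variable [Fintype V] [DecidableRel G.Adj]

theorem ncard_neighborSet (u : V) : (G.neighborSet u).ncard = G.degree u := by
  rw [← card_neighborFinset_eq_degree, ← Set.ncard_coe_finset, coe_neighborFinset]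

theorem ncard_neighborSet_inter_le_degree (u : V) (W : Set V) :
    (G.neighborSet u ∩ W).ncard ≤ G.degree u :=
  (Set.ncard_le_ncard Set.inter_subset_left).trans_eq (G.ncard_neighborSet u)

theorem degenerate_maxDegree : G.Degenerate G.maxDegree := fun _ ⟨u, hu⟩ =>
  ⟨u, hu, (G.ncard_neighborSet_inter_le_degree u _).trans (G.degree_le_maxDegree u)⟩

theorem Connected.degenerate_maxDegree_sub_one (hG : G.Connected) {v₀ : V}
    (hv₀ : G.degree v₀ < G.maxDegree) : G.Degenerate (G.maxDegree - 1) := by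
  intro W ⟨u, hu⟩
  by_cases hW : ∀ w, w ∈ W
  · exact ⟨v₀, hW v₀, by have := G.ncard_neighborSet_inter_le_degree v₀ W; omega⟩
  push Not at hW
  obtain ⟨w, hw⟩ := hW
  obtain ⟨d, -, hdW, hdW'⟩ := (hG.preconnected u w).some.exists_boundary_dart W hu hw
  refine ⟨d.fst, hdW, ?_⟩
  have hlt : (G.neighborSet d.fst ∩ W).ncard < (G.neighborSet d.fst).ncard :=
    Set.ncard_lt_ncard ((Set.ssubset_iff_of_subset Set.inter_subset_left).2
      ⟨d.snd, d.adj, fun h => hdW' h.2⟩)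
  have := G.ncard_neighborSet d.fst
  have := G.degree_le_maxDegree d.fst
  omega

end SimpleGraph

end

theorem kempeEquiv_of_maxDegree_general {V : Type*} [Fintype V]
    (G : SimpleGraph V) [DecidableRel G.Adj] :
    (∀ q : ℕ, G.maxDegree + 1 ≤ q →
      ∀ f g : V → Fin q, IsProperColoring G f → IsProperColoring G g →
        KempeEquiv G f g) ∧
    (G.Connected → (∃ v : V, G.degree v < G.maxDegree) →
      ∀ f g : V → Fin G.maxDegree, IsProperColoring G f → IsProperColoring G g →
        KempeEquiv G f g) :=
  ⟨fun _ hq _ _ hf hg => G.degenerate_maxDegree.kempeEquiv (by omega) hf hg,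
    fun hG ⟨_, hv₀⟩ _ _ hf hg =>
      (hG.degenerate_maxDegree_sub_one hv₀).kempeEquiv (by omega) hf hg⟩

/-- Let `G` be a finite simple graph with maximum degree `Δ`.
If `q ≥ Δ + 1`, then any two proper `q`-colorings of `G` are Kempe equivalent.
Moreover, if `G` is connected and has a vertex of degree `< Δ`, then any two
proper `Δ`-colorings of `G` are Kempe equivalent. -/
theorem kempeEquiv_of_maxDegree {V : Type*} [Fintype V] [DecidableEq V]
    (G : SimpleGraph V) [DecidableRel G.Adj] :
    (∀ q : ℕ, G.maxDegree + 1 ≤ q →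
      ∀ f g : V → Fin q, IsProperColoring G f → IsProperColoring G g →
        KempeEquiv G f g) ∧
    (G.Connected → (∃ v : V, G.degree v < G.maxDegree) →
      ∀ f g : V → Fin G.maxDegree, IsProperColoring G f → IsProperColoring G g →
        KempeEquiv G f g) :=
  kempeEquiv_of_maxDegree_general G
end

section
/- Let L, M ≥ 1 be integers. The triangulation T(3L,3M) admits a non-singular proper 4-coloring if and only if L and M are both even. Moreover, if L = 2ℓ and M = 2m, then the coloring c_ns of T(6ℓ,6m) defined by c_ns(x,y) = 0 if x and y are both odd, 1 if x is odd and y is even, 2 if x is even and y is odd, and 3 if x and y are both even (this is well defined since the moduli 6ℓ and 6m are even) is a non-singular proper 4-coloring with |deg(c_ns)| = 18ℓm; in particular, if ℓ and m are both odd, then there exist two proper 4-colorings of T(6ℓ,6m) that are not Kempe equivalent. -/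
/-- The six neighbour displacement vectors of the triangular lattice. -/
def hexDirsM (r s : ℕ) : Set (ZMod r × ZMod s) :=
  {(1,0), (-1,0), (0,1), (0,-1), (1,1), (-1,-1)}

/-- The triangulation `T(r,s)` of the torus. -/
def TriRS (r s : ℕ) : SimpleGraph (ZMod r × ZMod s) where
  Adj u v := u ≠ v ∧ v - u ∈ hexDirsM r s
  symm := by
    constructor
    rintro u v ⟨hne, hmem⟩
    refine ⟨hne.symm, ?_⟩
    rw [show u - v = -(v - u) from (neg_sub v u).symm]
    simp only [hexDirsM, Set.mem_insert_iff, Set.mem_singleton_iff] at hmem ⊢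
    rcases hmem with h|h|h|h|h|h <;> rw [h] <;> simp [Prod.ext_iff]
  loopless := ⟨fun u h => h.1 rfl⟩

/-- The sign contribution of a face whose ordered vertex colors are `(a,b,c)`. -/
def faceSign (a b c : Fin 4) : ℤ :=
  if (a, b, c) = ((0 : Fin 4), (1 : Fin 4), (2 : Fin 4)) ∨ (a, b, c) = (1, 2, 0)
      ∨ (a, b, c) = (2, 0, 1) then 1
  else if (a, b, c) = ((0 : Fin 4), (2 : Fin 4), (1 : Fin 4)) ∨ (a, b, c) = (2, 1, 0)
      ∨ (a, b, c) = (1, 0, 2) then -1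
  else 0

/-- The degree of a 4-coloring of `T(r,s)`. -/
def degRS (r s : ℕ) (f : ZMod r × ZMod s → Fin 4) : ℤ :=
  ∑ i ∈ Finset.range r, ∑ j ∈ Finset.range s,
    (faceSign (f ((i : ZMod r), (j : ZMod s)))
              (f ((i : ZMod r) + 1, (j : ZMod s) + 1))
              (f ((i : ZMod r), (j : ZMod s) + 1))
      + faceSign (f ((i : ZMod r), (j : ZMod s)))
                 (f ((i : ZMod r) + 1, (j : ZMod s)))
                 (f ((i : ZMod r) + 1, (j : ZMod s) + 1)))

/-- Each edge of T(r,s) lies in exactly two triangular faces.  For the edge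
from `x` to `x + d` (`d` one of the six displacement vectors), this is the
pair of vertices completing those two faces. -/
def apexRS (r s : ℕ) (x : ZMod r × ZMod s) (d : ℤ × ℤ) :
    (ZMod r × ZMod s) × (ZMod r × ZMod s) :=
  if d = (1, 0) then (x + (1, 1), x - (0, 1))
  else if d = (-1, 0) then (x + (0, 1), x - (1, 1))
  else if d = (0, 1) then (x + (1, 1), x - (1, 0))
  else if d = (0, -1) then (x + (1, 0), x - (1, 1))
  else if d = (1, 1) then (x + (0, 1), x + (1, 0))
  else (x - (1, 0), x - (0, 1))

/-- A 4-coloring of T(r,s) is non-singular if every edge is non-singular for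
it, i.e. the two vertices completing the two faces of each edge get distinct
colors. -/
def NonSingularRS (r s : ℕ) (f : ZMod r × ZMod s → Fin 4) : Prop :=
  ∀ x : ZMod r × ZMod s, ∀ d ∈ hexDirs,
    f (apexRS r s x d).1 ≠ f (apexRS r s x d).2

/-- The explicit coloring `c_ns`, defined by the parities of the coordinates. -/
def cns (r s : ℕ) : ZMod r × ZMod s → Fin 4 := fun x =>
  if x.1.val % 2 = 1 then (if x.2.val % 2 = 1 then 0 else 1)
  else (if x.2.val % 2 = 1 then 2 else 3)


/-!
A non-singular proper 4-colouring `f` of `T(r,s)` satisfies `f (x + e) = f (x - e)` for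
`e = (1,0), (0,1)`: both vertices must receive the colour missing from a triangle through `x`.
So `f` is `2e`-periodic; as `x` and `x + e` get different colours, `e` has even order, i.e. `r` and
`s` are even. Conversely, for even `r, s` the colouring by coordinate parities is proper and
non-singular, and its degree counts the cells `(i, j)` with `i ≢ j (mod 2)`.

The degree modulo 4 is a Kempe invariant. Orienting the edges along `(1,1)`, `(-1,0)`, `(0,-1)`
turns every face into a directed triangle, up-faces and down-faces with opposite orientations, so
a function of the faces that is locally the coboundary of an edge function sums to zero. A Kempe
change of two colours different from `3` changes the face signs by such a coboundary mod 4, and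
relabelling by a transposition `(k 3)` negates the degree by the same argument. Hence the parity
colouring, of degree `18ℓm ≡ 2 (mod 4)` for odd `ℓ, m`, is not Kempe equivalent to the
3-colouring `x + y mod 3`, of degree `0`.
-/

open Finset Function

section Kempe

variable {V : Type*} {q : ℕ}

/-- `p` records whether the vertex lies in the recoloured region. -/
def chainSwap (a b c : Fin q) (p : Bool) : Fin q := bif p then Equiv.swap a b c else c

/-- `χ` is constant on the connected components of the subgraph induced on the colours `a`
and `b`. -/
def IsKempeRegion (G : SimpleGraph V) (f : V → Fin q) (a b : Fin q) (χ : V → Bool) : Prop :=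
  ∀ u v, G.Adj u v → (f u = a ∨ f u = b) → (f v = a ∨ f v = b) → χ u = χ v

theorem KempeStep.exists_chainSwap {G : SimpleGraph V} {f g : V → Fin q} (h : KempeStep G f g) :
    ∃ a b χ, a ≠ b ∧ IsKempeRegion G f a b χ ∧ g = fun v => chainSwap a b (f v) (χ v) := by
  classical
  obtain ⟨a, b, hab, C, hg⟩ := h
  let H := G.induce {v | f v = a ∨ f v = b}
  refine ⟨a, b, fun v => decide (∃ h : f v = a ∨ f v = b, H.connectedComponentMk ⟨v, h⟩ = C),
    hab, fun u v huv hu hv => ?_, funext fun v => ?_⟩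
  · have : H.connectedComponentMk ⟨u, hu⟩ = H.connectedComponentMk ⟨v, hv⟩ :=
      SimpleGraph.ConnectedComponent.connectedComponentMk_eq_of_adj (G := H) huv
    simp only [hu, hv, exists_true_left, this]
  · rw [hg v]
    by_cases hv : f v = a ∨ f v = b
    · by_cases hC : H.connectedComponentMk ⟨v, hv⟩ = C <;> simp [chainSwap, hv, hC, H]
    · simp [chainSwap, hv]

theorem IsKempeRegion.isProperColoring_chainSwap {G : SimpleGraph V} {f : V → Fin q}
    {a b : Fin q} {χ : V → Bool} (hχ : IsKempeRegion G f a b χ) (hf : IsProperColoring G f) :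
    IsProperColoring G fun v => chainSwap a b (f v) (χ v) := by
  have boundary : ∀ u v, G.Adj u v → χ u = false → χ v = true → f u ≠ Equiv.swap a b (f v) := by
    intro u v huv hu₁ hv₁
    by_cases hv : f v = a ∨ f v = b
    · have hu : ¬(f u = a ∨ f u = b) := fun hu => by simpa [hu₁, hv₁] using hχ u v huv hu hv
      rcases hv with h | h <;> simp only [h, Equiv.swap_apply_left, Equiv.swap_apply_right] <;>
        tauto
    · rw [Equiv.swap_apply_of_ne_of_ne (fun h => hv (.inl h)) fun h => hv (.inr h)]
      exact hf huv
  intro u v huv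
  cases hu : χ u <;> cases hv : χ v <;> simp only [chainSwap, hu, hv, cond_true, cond_false]
  · exact hf huv
  · exact boundary u v huv hu hv
  · exact (boundary v u huv.symm hv hu).symm
  · exact (Equiv.swap a b).injective.ne (hf huv)

theorem Equiv.Perm.apply_chainSwap (π : Equiv.Perm (Fin q)) (a b c : Fin q) (p : Bool) :
    π (chainSwap a b c p) = chainSwap (π a) (π b) (π c) p := by
  cases p
  · rfl
  · simp [chainSwap, Equiv.swap_apply_apply]

theorem IsKempeRegion.perm {G : SimpleGraph V} {f : V → Fin q} {a b : Fin q} {χ : V → Bool}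
    (hχ : IsKempeRegion G f a b χ) (π : Equiv.Perm (Fin q)) :
    IsKempeRegion G (π ∘ f) (π a) (π b) χ := by
  simp only [IsKempeRegion, comp_apply, π.apply_eq_iff_eq]
  exact hχ

end Kempe

theorem sum_range_natCast_zmod {M : Type*} [AddCommMonoid M] (n : ℕ) [NeZero n] (h : ZMod n → M) :
    ∑ i ∈ range n, h i = ∑ x, h x :=
  sum_nbij' (fun i => (i : ZMod n)) ZMod.val (by simp) (by simp [ZMod.val_lt])
    (fun i hi => ZMod.val_cast_of_lt (mem_range.1 hi)) (fun x _ => ZMod.natCast_zmod_val x)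
    (fun _ _ => rfl)

theorem sum_range_two_mul {M : Type*} [AddCommMonoid M] (h : ZMod 2 → M) (b : ℕ) :
    ∑ j ∈ range (2 * b), h j = b • (h 0 + h 1) := by
  induction b with
  | zero => simp
  | succ b ih =>
    rw [mul_add, mul_one, sum_range_succ, sum_range_succ, ih, succ_nsmul, add_assoc]
    congr 3 <;> push_cast <;> simp [show (2 : ZMod 2) = 0 from rfl]

theorem Function.Periodic.of_map_add_eq_map_sub {G α : Type*} [AddCommGroup G] {f : G → α}
    {e : G} {n : ℕ} (hn : Odd n) (hne : n • e = 0) (h : ∀ x, f (x + e) = f (x - e)) :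
    Periodic f e := by
  have h₂ : Periodic f (2 • e) := fun x => by rw [two_nsmul, ← add_assoc, h, add_sub_cancel_right]
  obtain ⟨k, rfl⟩ := hn
  have : e = (k + 1) • 2 • e := by
    rw [smul_smul, show (k + 1) * 2 = 2 * k + 1 + 1 by ring, succ_nsmul, hne, zero_add]
  rw [this]
  exact h₂.nsmul _

theorem Prod.add_mk_add_mk {G H : Type*} [AddSemigroup G] [AddSemigroup H] (x : G × H) (a c : G)
    (b d : H) : x + (a, b) + (c, d) = x + (a + c, b + d) := by
  rw [add_assoc]; rfl

theorem Prod.sub_mk_add_mk {G H : Type*} [AddCommGroup G] [AddCommGroup H] (x : G × H) (a c : G)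
    (b d : H) : x - (a, b) + (c, d) = x + (c - a, d - b) := by
  rw [sub_add_eq_add_sub, add_sub_assoc]; rfl

theorem fin_four_eq_of_ne_of_ne_of_ne : ∀ a b c d e : Fin 4, a ≠ b → b ≠ c → a ≠ c →
    d ≠ a → d ≠ b → d ≠ c → e ≠ a → e ≠ b → e ≠ c → d = e := by
  decide

theorem faceSign_antisymm : ∀ a b c : Fin 4, faceSign a c b = -faceSign a b c := by decide

theorem faceSign_swap_three_add_eq_cyclic {k : Fin 4} (hk : k ≠ 3) (x y z : Fin 4) :
    faceSign (Equiv.swap k 3 x) (Equiv.swap k 3 y) (Equiv.swap k 3 z) + faceSign x y z =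
      faceSign x y k + faceSign y z k + faceSign z x k := by
  revert k x y z; decide

def kempeCochain (a c : Fin 4) (p : Bool) (c' : Fin 4) (p' : Bool) : ZMod 4 :=
  if (p ∧ c = a ∧ c' ≠ 3) ∨ (c = 3 ∧ p' ∧ c' = a) then 2 else 0

/-- When `a, b ≠ 3`, the faces whose sign changes are those coloured `{a, b, c}`, `c ≠ 3`, whose
`ab`-edge is recoloured, and each changes by `±2`; the cochain shows that there are evenly many. -/
theorem faceSign_chainSwap_sub_eq_cyclic : ∀ a b : Fin 4, a ≠ b → a ≠ 3 → b ≠ 3 →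
    ∀ (c₁ c₂ c₃ : Fin 4) (p₁ p₂ p₃ : Bool), c₁ ≠ c₂ → c₂ ≠ c₃ → c₁ ≠ c₃ →
    ((c₁ = a ∨ c₁ = b) → (c₂ = a ∨ c₂ = b) → p₁ = p₂) →
    ((c₂ = a ∨ c₂ = b) → (c₃ = a ∨ c₃ = b) → p₂ = p₃) →
    ((c₁ = a ∨ c₁ = b) → (c₃ = a ∨ c₃ = b) → p₁ = p₃) →
    ((faceSign (chainSwap a b c₁ p₁) (chainSwap a b c₂ p₂) (chainSwap a b c₃ p₃)
      - faceSign c₁ c₂ c₃ : ℤ) : ZMod 4) =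
      kempeCochain a c₁ p₁ c₂ p₂ + kempeCochain a c₂ p₂ c₃ p₃ + kempeCochain a c₃ p₃ c₁ p₁ := by
  decide

section Torus

variable {r s : ℕ}

theorem triRS_adj_add (x : ZMod r × ZMod s) {d : ZMod r × ZMod s} (hd : d ∈ hexDirsM r s)
    (hd₀ : d ≠ 0) : (TriRS r s).Adj x (x + d) :=
  ⟨fun h => hd₀ (by simpa using h.symm), by simpa using hd⟩

section Nontrivial

variable [Nontrivial (ZMod r)] [Nontrivial (ZMod s)]

theorem triRS_adj_add_one_zero (x : ZMod r × ZMod s) : (TriRS r s).Adj x (x + (1, 0)) :=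
  triRS_adj_add x (by simp [hexDirsM]) (by simp)

theorem triRS_adj_add_zero_one (x : ZMod r × ZMod s) : (TriRS r s).Adj x (x + (0, 1)) :=
  triRS_adj_add x (by simp [hexDirsM]) (by simp)

theorem triRS_adj_add_one_one (x : ZMod r × ZMod s) : (TriRS r s).Adj x (x + (1, 1)) :=
  triRS_adj_add x (by simp [hexDirsM]) (by simp)

theorem triRS_adj_add_one_zero_add_one_one (x : ZMod r × ZMod s) :
    (TriRS r s).Adj (x + (1, 0)) (x + (1, 1)) := by
  have h := triRS_adj_add_zero_one (x + (1, 0))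
  simpa only [Prod.add_mk_add_mk, add_zero, zero_add] using h

theorem triRS_adj_add_zero_one_add_one_one (x : ZMod r × ZMod s) :
    (TriRS r s).Adj (x + (0, 1)) (x + (1, 1)) := by
  have h := triRS_adj_add_one_zero (x + (0, 1))
  simpa only [Prod.add_mk_add_mk, add_zero, zero_add] using h

end Nontrivial

variable [NeZero r] [NeZero s]

def faceSum {R : Type*} [AddCommMonoid R]
    (h : ZMod r × ZMod s → ZMod r × ZMod s → ZMod r × ZMod s → R) : R :=
  ∑ v, (h v (v + (1, 1)) (v + (0, 1)) + h v (v + (1, 0)) (v + (1, 1)))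

theorem degRS_eq_faceSum (f : ZMod r × ZMod s → Fin 4) :
    degRS r s f = faceSum fun x y z => faceSign (f x) (f y) (f z) := by
  rw [degRS, faceSum, Fintype.sum_prod_type, ← sum_range_natCast_zmod r]
  refine sum_congr rfl fun i _ => ?_
  simp only [← sum_range_natCast_zmod s, Prod.mk_add_mk, add_zero]

theorem faceSum_add {R : Type*} [AddCommMonoid R]
    (h₁ h₂ : ZMod r × ZMod s → ZMod r × ZMod s → ZMod r × ZMod s → R) :
    faceSum h₁ + faceSum h₂ = faceSum fun x y z => h₁ x y z + h₂ x y z := by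
  rw [faceSum, faceSum, faceSum, ← sum_add_distrib]
  exact sum_congr rfl fun _ _ => add_add_add_comm _ _ _ _

theorem faceSum_sub {R : Type*} [AddCommGroup R]
    (h₁ h₂ : ZMod r × ZMod s → ZMod r × ZMod s → ZMod r × ZMod s → R) :
    faceSum h₁ - faceSum h₂ = faceSum fun x y z => h₁ x y z - h₂ x y z := by
  rw [faceSum, faceSum, faceSum, ← sum_sub_distrib]
  exact sum_congr rfl fun _ _ => add_sub_add_comm _ _ _ _

theorem map_faceSum {R S : Type*} [AddCommMonoid R] [AddCommMonoid S] (φ : R →+ S)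
    (h : ZMod r × ZMod s → ZMod r × ZMod s → ZMod r × ZMod s → R) :
    φ (faceSum h) = faceSum fun x y z => φ (h x y z) := by
  simp only [faceSum, map_sum, map_add]

-- With edges oriented along `(1,1)`, `(-1,0)`, `(0,-1)`, each side runs once over every edge.
theorem sum_cyclic_up_eq_sum_cyclic_down {R : Type*} [AddCommMonoid R]
    (Φ : ZMod r × ZMod s → ZMod r × ZMod s → R) :
    ∑ v, (Φ v (v + (1, 1)) + Φ (v + (1, 1)) (v + (0, 1)) + Φ (v + (0, 1)) v) =
      ∑ v, (Φ v (v + (1, 1)) + Φ (v + (1, 1)) (v + (1, 0)) + Φ (v + (1, 0)) v) := by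
  have shift : ∀ (c : ZMod r × ZMod s) (F : ZMod r × ZMod s → R),
      ∑ v, F (v + c) = ∑ v, F v := fun c F => Equiv.sum_comp (Equiv.addRight c) F
  have h₁ := shift (0, 1) fun w => Φ (w + (1, 0)) w
  have h₂ := shift (1, 0) fun w => Φ (w + (0, 1)) w
  simp only [Prod.add_mk_add_mk, add_zero, zero_add] at h₁ h₂
  simp only [sum_add_distrib, h₁, h₂]
  rw [add_right_comm]

variable [Nontrivial (ZMod r)] [Nontrivial (ZMod s)]

theorem faceSum_eq_zero_of_eq_cyclic {R : Type*} [AddCommGroup R]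
    (h : ZMod r × ZMod s → ZMod r × ZMod s → ZMod r × ZMod s → R)
    (Φ : ZMod r × ZMod s → ZMod r × ZMod s → R) (h_antisymm : ∀ x y z, h x z y = -h x y z)
    (hΦ : ∀ x y z, (TriRS r s).Adj x y → (TriRS r s).Adj y z → (TriRS r s).Adj x z →
      h x y z = Φ x y + Φ y z + Φ z x) :
    faceSum h = 0 := by
  have up : ∀ v : ZMod r × ZMod s, h v (v + (1, 1)) (v + (0, 1)) =
      Φ v (v + (1, 1)) + Φ (v + (1, 1)) (v + (0, 1)) + Φ (v + (0, 1)) v := fun v =>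
    hΦ _ _ _ (triRS_adj_add_one_one v) (triRS_adj_add_zero_one_add_one_one v).symm
      (triRS_adj_add_zero_one v)
  have down : ∀ v : ZMod r × ZMod s, h v (v + (1, 0)) (v + (1, 1)) =
      -(Φ v (v + (1, 1)) + Φ (v + (1, 1)) (v + (1, 0)) + Φ (v + (1, 0)) v) := fun v => by
    rw [h_antisymm, hΦ _ _ _ (triRS_adj_add_one_one v) (triRS_adj_add_one_zero_add_one_one v).symm
      (triRS_adj_add_one_zero v)]
  simp only [faceSum, up, down, ← sub_eq_add_neg, sum_sub_distrib,
    sum_cyclic_up_eq_sum_cyclic_down, sub_self]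

variable {f : ZMod r × ZMod s → Fin 4}

theorem degRS_swap_three_comp {k : Fin 4} (hk : k ≠ 3) :
    degRS r s (Equiv.swap k 3 ∘ f) = -degRS r s f := by
  rw [eq_neg_iff_add_eq_zero, degRS_eq_faceSum, degRS_eq_faceSum, faceSum_add]
  refine faceSum_eq_zero_of_eq_cyclic _ (fun x y => faceSign (f x) (f y) k) (fun x y z => ?_)
    fun x y z _ _ _ => faceSign_swap_three_add_eq_cyclic hk _ _ _
  rw [faceSign_antisymm, faceSign_antisymm (f x)]
  abel

theorem degRS_chainSwap_modFour_of_ne_three {a b : Fin 4} {χ : ZMod r × ZMod s → Bool}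
    (hab : a ≠ b) (ha : a ≠ 3) (hb : b ≠ 3) (hf : IsProperColoring (TriRS r s) f)
    (hχ : IsKempeRegion (TriRS r s) f a b χ) :
    ((degRS r s (fun v => chainSwap a b (f v) (χ v)) : ℤ) : ZMod 4) = degRS r s f := by
  rw [← sub_eq_zero, ← Int.cast_sub, degRS_eq_faceSum, degRS_eq_faceSum, faceSum_sub]
  change Int.castAddHom (ZMod 4) _ = 0
  rw [map_faceSum]
  refine faceSum_eq_zero_of_eq_cyclic _ (fun x y => kempeCochain a (f x) (χ x) (f y) (χ y))
    (fun x y z => ?_) fun x y z hxy hyz hxz =>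
      faceSign_chainSwap_sub_eq_cyclic a b hab ha hb _ _ _ _ _ _ (hf hxy) (hf hyz) (hf hxz)
        (hχ x y hxy) (hχ y z hyz) (hχ x z hxz)
  rw [faceSign_antisymm (chainSwap a b (f x) (χ x)), faceSign_antisymm (f x), ← map_neg]
  congr 1
  ring

theorem degRS_chainSwap_modFour {a b : Fin 4} {χ : ZMod r × ZMod s → Bool} (hab : a ≠ b)
    (hf : IsProperColoring (TriRS r s) f) (hχ : IsKempeRegion (TriRS r s) f a b χ) :
    ((degRS r s (fun v => chainSwap a b (f v) (χ v)) : ℤ) : ZMod 4) = degRS r s f := by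
  have hfree : ∀ a b : Fin 4, ∃ k : Fin 4, k ≠ 3 ∧ k ≠ a ∧ k ≠ b := by decide
  obtain ⟨k, hk, hka, hkb⟩ := hfree a b
  set τ := Equiv.swap k 3
  have hτ : ∀ c, c ≠ k → τ c ≠ 3 := fun c hc h => hc (by simpa [τ] using congrArg τ h)
  have key : ((degRS r s (τ ∘ fun v => chainSwap a b (f v) (χ v)) : ℤ) : ZMod 4) =
      degRS r s (τ ∘ f) := by
    rw [show (τ ∘ fun v => chainSwap a b (f v) (χ v)) =
        fun v => chainSwap (τ a) (τ b) ((τ ∘ f) v) (χ v) from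
      funext fun v => τ.apply_chainSwap _ _ _ _]
    exact degRS_chainSwap_modFour_of_ne_three (τ.injective.ne hab) (hτ a hka.symm)
      (hτ b hkb.symm) (fun _ _ h => τ.injective.ne (hf h)) (hχ.perm τ)
  rw [degRS_swap_three_comp hk, degRS_swap_three_comp hk] at key
  push_cast at key
  exact neg_inj.1 key

theorem KempeEquiv.degRS_modFour {g : ZMod r × ZMod s → Fin 4}
    (h : KempeEquiv (TriRS r s) f g) (hf : IsProperColoring (TriRS r s) f) :
    IsProperColoring (TriRS r s) g ∧ ((degRS r s g : ℤ) : ZMod 4) = degRS r s f := by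
  induction h with
  | refl => exact ⟨hf, rfl⟩
  | tail _ hstep ih =>
    obtain ⟨a, b, χ, hab, hχ, rfl⟩ := hstep.exists_chainSwap
    exact ⟨hχ.isProperColoring_chainSwap ih.1, (degRS_chainSwap_modFour hab ih.1 hχ).trans ih.2⟩

end Torus

section NonSingular

variable {r s : ℕ} [Nontrivial (ZMod r)] [Nontrivial (ZMod s)] {f : ZMod r × ZMod s → Fin 4}

theorem NonSingularRS.map_add_eq_map_sub (hf : IsProperColoring (TriRS r s) f)
    (hns : NonSingularRS r s f) (x : ZMod r × ZMod s) :
    f (x + (0, 1)) = f (x - (0, 1)) ∧ f (x + (1, 0)) = f (x - (1, 0)) := by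
  have h₁₁ := hns x (1, 1) (by decide)
  have h₁₀ := hns x (1, 0) (by decide)
  have h₀₁ := hns x (0, 1) (by decide)
  norm_num [apexRS] at h₁₁ h₁₀ h₀₁
  have below : (TriRS r s).Adj (x - (0, 1)) x ∧ (TriRS r s).Adj (x - (0, 1)) (x + (1, 0)) := by
    constructor
    · have h := triRS_adj_add_zero_one (x - (0, 1))
      simpa only [sub_add_cancel] using h
    · have h := triRS_adj_add_one_one (x - (0, 1))
      simpa only [Prod.sub_mk_add_mk, sub_zero, sub_self] using h
  have left : (TriRS r s).Adj (x - (1, 0)) x ∧ (TriRS r s).Adj (x - (1, 0)) (x + (0, 1)) := by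
    constructor
    · have h := triRS_adj_add_one_zero (x - (1, 0))
      simpa only [sub_add_cancel] using h
    · have h := triRS_adj_add_one_one (x - (1, 0))
      simpa only [Prod.sub_mk_add_mk, sub_zero, sub_self] using h
  constructor
  · exact fin_four_eq_of_ne_of_ne_of_ne _ _ _ _ _ (hf (triRS_adj_add_one_zero x))
      (hf (triRS_adj_add_one_zero_add_one_one x)) (hf (triRS_adj_add_one_one x))
      (hf (triRS_adj_add_zero_one x)).symm h₁₁ (hf (triRS_adj_add_zero_one_add_one_one x))
      (hf below.1) (hf below.2) (Ne.symm h₁₀)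
  · exact fin_four_eq_of_ne_of_ne_of_ne _ _ _ _ _ (hf (triRS_adj_add_zero_one x))
      (hf (triRS_adj_add_zero_one_add_one_one x)) (hf (triRS_adj_add_one_one x))
      (hf (triRS_adj_add_one_zero x)).symm (Ne.symm h₁₁) (hf (triRS_adj_add_one_zero_add_one_one x))
      (hf left.1) (hf left.2) (Ne.symm h₀₁)

theorem NonSingularRS.even (hf : IsProperColoring (TriRS r s) f) (hns : NonSingularRS r s f) :
    Even r ∧ Even s := by
  constructor <;> by_contra hodd <;> rw [Nat.not_even_iff_odd] at hodd
  · have := (Periodic.of_map_add_eq_map_sub hodd (by ext <;> simp)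
      fun x => (hns.map_add_eq_map_sub hf x).2) 0
    exact hf (triRS_adj_add_one_zero 0) this.symm
  · have := (Periodic.of_map_add_eq_map_sub hodd (by ext <;> simp)
      fun x => (hns.map_add_eq_map_sub hf x).1) 0
    exact hf (triRS_adj_add_zero_one 0) this.symm

end NonSingular

section Colorings

variable {r s : ℕ}

theorem isProperColoring_comp_addMonoidHom {A : Type*} [AddCommGroup A] {q : ℕ} {c : A → Fin q}
    (hc : Injective c) (φ : ZMod r × ZMod s →+ A) (hφ : ∀ d ∈ hexDirsM r s, φ d ≠ 0) :
    IsProperColoring (TriRS r s) (c ∘ φ) := by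
  rintro u v ⟨-, hd⟩ h
  exact hφ _ hd (by rw [map_sub, sub_eq_zero]; exact (hc h).symm)

def parityColor (p : ZMod 2 × ZMod 2) : Fin 4 :=
  if p.1 = 1 then (if p.2 = 1 then 0 else 1) else (if p.2 = 1 then 2 else 3)

theorem parityColor_injective : Injective parityColor := by decide

def parityHom (hr : 2 ∣ r) (hs : 2 ∣ s) : ZMod r × ZMod s →+ ZMod 2 × ZMod 2 :=
  (ZMod.castHom hr (ZMod 2)).toAddMonoidHom.prodMap (ZMod.castHom hs (ZMod 2)).toAddMonoidHom

theorem parityHom_mk (hr : 2 ∣ r) (hs : 2 ∣ s) (a : ZMod r) (b : ZMod s) :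
    parityHom hr hs (a, b) = (ZMod.castHom hr (ZMod 2) a, ZMod.castHom hs (ZMod 2) b) := rfl

def threeColor (k : ZMod 3) : Fin 4 := ⟨k.val, (ZMod.val_lt k).trans (by norm_num)⟩

theorem threeColor_injective : Injective threeColor := by decide

def diagHom (hr : 3 ∣ r) (hs : 3 ∣ s) : ZMod r × ZMod s →+ ZMod 3 :=
  (ZMod.castHom hr (ZMod 3)).toAddMonoidHom.coprod (ZMod.castHom hs (ZMod 3)).toAddMonoidHom

theorem diagHom_mk (hr : 3 ∣ r) (hs : 3 ∣ s) (a : ZMod r) (b : ZMod s) :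
    diagHom hr hs (a, b) = ZMod.castHom hr (ZMod 3) a + ZMod.castHom hs (ZMod 3) b := rfl

def diagColoring (r s : ℕ) (x : ZMod r × ZMod s) : Fin 4 :=
  threeColor (ZMod.cast x.1 + ZMod.cast x.2)

theorem diagColoring_eq_comp (hr : 3 ∣ r) (hs : 3 ∣ s) :
    diagColoring r s = threeColor ∘ diagHom hr hs := rfl

theorem isProperColoring_diagColoring (hr : 3 ∣ r) (hs : 3 ∣ s) :
    IsProperColoring (TriRS r s) (diagColoring r s) := by
  rw [diagColoring_eq_comp hr hs]
  refine isProperColoring_comp_addMonoidHom threeColor_injective _ fun d hd => ?_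
  simp only [hexDirsM, Set.mem_insert_iff, Set.mem_singleton_iff] at hd
  rcases hd with rfl | rfl | rfl | rfl | rfl | rfl <;>
    simp only [diagHom_mk, map_one, map_zero, map_neg] <;> decide

variable [NeZero r] [NeZero s]

theorem cns_eq_parityColor_comp (hr : 2 ∣ r) (hs : 2 ∣ s) :
    cns r s = parityColor ∘ parityHom hr hs := by
  funext ⟨a, b⟩
  simp only [cns, parityColor, comp_apply, parityHom_mk, ZMod.castHom_apply, ZMod.cast_eq_val,
    ZMod.natCast_eq_one_iff_odd, Nat.odd_iff]

theorem cns_isProperColoring (hr : 2 ∣ r) (hs : 2 ∣ s) :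
    IsProperColoring (TriRS r s) (cns r s) := by
  rw [cns_eq_parityColor_comp hr hs]
  refine isProperColoring_comp_addMonoidHom parityColor_injective _ fun d hd => ?_
  simp only [hexDirsM, Set.mem_insert_iff, Set.mem_singleton_iff] at hd
  rcases hd with rfl | rfl | rfl | rfl | rfl | rfl <;>
    simp only [parityHom_mk, map_one, map_zero, map_neg] <;> decide

theorem cns_nonSingular (hr : 2 ∣ r) (hs : 2 ∣ s) : NonSingularRS r s (cns r s) := by
  rw [cns_eq_parityColor_comp hr hs]
  intro x d hd
  simp only [hexDirs, mem_insert, mem_singleton] at hd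
  rcases hd with rfl | rfl | rfl | rfl | rfl | rfl <;>
    norm_num [apexRS, sub_eq_add_neg] <;>
    simp only [map_neg, parityHom_mk, map_one, map_zero] <;>
    generalize parityHom hr hs x = p <;> revert p <;> decide

theorem degRS_cns (hr : 2 ∣ r) (hs : 2 ∣ s) : degRS r s (cns r s) = (r * (s / 2) : ℕ) := by
  have cell : ∀ x y : ZMod 2,
      faceSign (parityColor (x, y)) (parityColor (x + 1, y + 1)) (parityColor (x, y + 1)) +
        faceSign (parityColor (x, y)) (parityColor (x + 1, y)) (parityColor (x + 1, y + 1)) =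
      if x = y then 0 else 1 := by decide
  have row : ∀ x : ZMod 2, ((if x = 0 then 0 else 1) + if x = 1 then 0 else 1 : ℤ) = 1 := by decide
  rw [degRS, cns_eq_parityColor_comp hr hs]
  obtain ⟨b, rfl⟩ := hs
  simp only [comp_apply, parityHom_mk, map_add, map_natCast, map_one, cell]
  rw [sum_congr rfl fun (i : ℕ) _ =>
    sum_range_two_mul (fun y => if (i : ZMod 2) = y then (0 : ℤ) else 1) b]
  simp only [row, sum_const, card_range, nsmul_eq_mul, mul_one, Nat.mul_div_cancel_left b two_pos,
    Nat.cast_mul]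

theorem degRS_diagColoring (hr : 3 ∣ r) (hs : 3 ∣ s) : degRS r s (diagColoring r s) = 0 := by
  have cell : ∀ k : ZMod 3,
      faceSign (threeColor k) (threeColor (k + 2)) (threeColor (k + 1)) +
        faceSign (threeColor k) (threeColor (k + 1)) (threeColor (k + 2)) = 0 := by decide
  rw [degRS_eq_faceSum, diagColoring_eq_comp hr hs]
  refine sum_eq_zero fun v _ => ?_
  simp only [comp_apply, map_add, diagHom_mk, map_one, map_zero, add_zero, zero_add,
    one_add_one_eq_two]
  exact cell _

end Colorings

theorem not_kempeEquiv_cns_diagColoring {l m : ℕ} (hl : Odd l) (hm : Odd m) :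
    ¬KempeEquiv (TriRS (6 * l) (6 * m)) (cns (6 * l) (6 * m)) (diagColoring (6 * l) (6 * m)) := by
  have hl₀ := hl.pos
  have hm₀ := hm.pos
  have : NeZero (6 * l) := ⟨by omega⟩
  have : NeZero (6 * m) := ⟨by omega⟩
  have : Fact (1 < 6 * l) := ⟨by omega⟩
  have : Fact (1 < 6 * m) := ⟨by omega⟩
  intro hK
  have hdeg := (hK.degRS_modFour (cns_isProperColoring ⟨3 * l, by ring⟩ ⟨3 * m, by ring⟩)).2
  rw [degRS_diagColoring ⟨2 * l, by ring⟩ ⟨2 * m, by ring⟩, degRS_cns ⟨3 * l, by ring⟩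
    ⟨3 * m, by ring⟩, Int.cast_zero, eq_comm, ZMod.intCast_zmod_eq_zero_iff_dvd] at hdeg
  obtain ⟨k, hk⟩ := hl.mul hm
  rw [show 6 * m / 2 = 3 * m by omega, show 6 * l * (3 * m) = 18 * (2 * k + 1) by rw [← hk]; ring]
    at hdeg
  omega

/-- T(3L,3M) has a non-singular proper 4-coloring iff `L` and `M` are both
even; if `L = 2ℓ` and `M = 2m` then `c_ns` is such a coloring of T(6ℓ,6m) with
`|deg c_ns| = 18ℓm`, and if moreover `ℓ` and `m` are odd then T(6ℓ,6m) has two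
proper 4-colorings that are not Kempe equivalent. -/
theorem nonsingular_coloring (L M : ℕ) (hL : 1 ≤ L) (hM : 1 ≤ M) :
    ((∃ f : ZMod (3 * L) × ZMod (3 * M) → Fin 4,
        IsProperColoring (TriRS (3 * L) (3 * M)) f ∧
        NonSingularRS (3 * L) (3 * M) f) ↔ (Even L ∧ Even M)) ∧
    (∀ l m : ℕ, L = 2 * l → M = 2 * m →
      IsProperColoring (TriRS (6 * l) (6 * m)) (cns (6 * l) (6 * m)) ∧
      NonSingularRS (6 * l) (6 * m) (cns (6 * l) (6 * m)) ∧
      (degRS (6 * l) (6 * m) (cns (6 * l) (6 * m))).natAbs = 18 * l * m ∧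
      (Odd l → Odd m →
        ∃ f g : ZMod (6 * l) × ZMod (6 * m) → Fin 4,
          IsProperColoring (TriRS (6 * l) (6 * m)) f ∧
          IsProperColoring (TriRS (6 * l) (6 * m)) g ∧
          ¬ KempeEquiv (TriRS (6 * l) (6 * m)) f g)) := by
  refine ⟨⟨fun ⟨f, hf, hns⟩ => ?_, fun ⟨hLe, hMe⟩ => ?_⟩, ?_⟩
  · have : Fact (1 < 3 * L) := ⟨by omega⟩
    have : Fact (1 < 3 * M) := ⟨by omega⟩
    obtain ⟨hr, hs⟩ := hns.even hf
    exact ⟨(Nat.even_mul.1 hr).resolve_left (by decide),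
      (Nat.even_mul.1 hs).resolve_left (by decide)⟩
  · have : NeZero (3 * L) := ⟨by omega⟩
    have : NeZero (3 * M) := ⟨by omega⟩
    have hr := (hLe.mul_left 3).two_dvd
    have hs := (hMe.mul_left 3).two_dvd
    exact ⟨cns _ _, cns_isProperColoring hr hs, cns_nonSingular hr hs⟩
  · rintro l m rfl rfl
    have : NeZero (6 * l) := ⟨by omega⟩
    have : NeZero (6 * m) := ⟨by omega⟩
    have hr : 2 ∣ 6 * l := ⟨3 * l, by ring⟩
    have hs : 2 ∣ 6 * m := ⟨3 * m, by ring⟩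
    refine ⟨cns_isProperColoring hr hs, cns_nonSingular hr hs, ?_, fun hl hm =>
      ⟨_, _, cns_isProperColoring hr hs, isProperColoring_diagColoring ⟨2 * l, by ring⟩
        ⟨2 * m, by ring⟩, not_kempeEquiv_cns_diagColoring hl hm⟩⟩
    rw [degRS_cns hr hs, Int.natAbs_natCast, show 6 * m / 2 = 3 * m by omega]
    ring
end
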